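/- Define the suboptimality Δ_M = max_y r(y) − E_{y∼π_M}[r(y)]. Under the Gibbs tilting π_β of π_ref by r/β, for any λ ∈ (0,1) with r non-constant on the support of π_ref, there exists β > 0 such that Δ_{π_β} = λ·Δ_{π_ref}. -/
import Mathlib


open Real Finset

/-- Suboptimality compression: for any λ ∈ (0,1) there is β > 0 with
Δ_{π_β} = λ·Δ_{π_ref}, where Δ_π = max r − E_π r. -/
theorem gibbs_suboptimality_compression {Y : Type*} [Fintype Y] [Nonempty Y]
    (πref : Y → ℝ) (hpos : ∀ y, 0 < πref y) (hsum : ∑ y, πref y = 1)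
    (r : Y → ℝ) (hnc : ∃ y₁ y₂ : Y, r y₁ ≠ r y₂)
    (lam : ℝ) (hlam0 : 0 < lam) (hlam1 : lam < 1) :
    ∃ β : ℝ, 0 < β ∧
      Finset.univ.sup' Finset.univ_nonempty r
          - ∑ y, (πref y * Real.exp (r y / β) / (∑ y', πref y' * Real.exp (r y' / β))) * r y
        = lam * (Finset.univ.sup' Finset.univ_nonempty r - ∑ y, πref y * r y) := by
  classical
  obtain ⟨y₁, y₂, hne⟩ := hnc
  set M : ℝ := Finset.univ.sup' Finset.univ_nonempty r with hMdef
  have hle : ∀ y, r y ≤ M := fun y => Finset.le_sup' r (Finset.mem_univ y)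
  obtain ⟨ystar, -, hystar⟩ := Finset.exists_mem_eq_sup' Finset.univ_nonempty r
  have hlt : ∃ y, r y < M := by
    by_contra h
    push_neg at h
    exact hne (((hle y₁).antisymm (h y₁)).trans ((hle y₂).antisymm (h y₂)).symm)
  obtain ⟨yb, hyb⟩ := hlt
  set Δ : ℝ := M - ∑ y, πref y * r y with hΔdef
  have hΔpos : 0 < Δ := by
    have h1 : ∑ y, πref y * r y < ∑ y, πref y * M := by
      refine Finset.sum_lt_sum (fun y _ => mul_le_mul_of_nonneg_left (hle y) (hpos y).le)
        ⟨yb, Finset.mem_univ yb, mul_lt_mul_of_pos_left hyb (hpos yb)⟩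
    have h2 : ∑ y, πref y * M = M := by rw [← Finset.sum_mul, hsum, one_mul]
    rw [hΔdef]; linarith
  set S : ℝ → ℝ := fun t => ∑ y, πref y * Real.exp (t * r y) with hSdef
  set N : ℝ → ℝ := fun t => ∑ y, πref y * Real.exp (t * r y) * r y with hNdef
  have hSpos : ∀ t, 0 < S t := by
    intro t
    simp only [hSdef]
    exact Finset.sum_pos (fun y _ => mul_pos (hpos y) (Real.exp_pos _)) Finset.univ_nonempty
  set g : ℝ → ℝ := fun t => M - N t / S t with hgdef
  have hcont : Continuous g := by
    rw [hgdef]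
    apply continuous_const.sub
    apply Continuous.div
    · rw [hNdef]; exact continuous_finset_sum _ fun y _ => by fun_prop
    · rw [hSdef]; exact continuous_finset_sum _ fun y _ => by fun_prop
    · exact fun t => (hSpos t).ne'
  have hg0 : g 0 = Δ := by
    simp [hgdef, hNdef, hSdef, hΔdef, hsum]
  set m : ℝ := Finset.univ.inf' Finset.univ_nonempty πref with hmdef
  have hmpos : 0 < m := by
    obtain ⟨y, -, hy⟩ := Finset.exists_mem_eq_inf' Finset.univ_nonempty πref
    rw [hmdef, hy]; exact hpos y
  set c : ℝ := (Fintype.card Y : ℝ) with hcdef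
  have hc0 : 0 < c := by
    rw [hcdef]; exact_mod_cast Fintype.card_pos
  clear_value m c
  -- key bound on g T for T > 0
  have hbound : ∀ T : ℝ, 0 < T → g T ≤ c / (m * T) := by
    intro T hT
    have hSlow : m * Real.exp (T * M) ≤ S T := by
      have h1 : m * Real.exp (T * M) ≤ πref ystar * Real.exp (T * r ystar) := by
        rw [← hystar]
        exact mul_le_mul_of_nonneg_right
          (hmdef ▸ Finset.inf'_le πref (Finset.mem_univ ystar)) (Real.exp_pos _).le
      refine h1.trans ?_
      simp only [hSdef]
      exact Finset.single_le_sum (f := fun y => πref y * Real.exp (T * r y))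
        (fun y _ => (mul_pos (hpos y) (Real.exp_pos _)).le) (Finset.mem_univ ystar)
    have hnum : M * S T - N T ≤ c * (Real.exp (T * M) / T) := by
      have heq : M * S T - N T = ∑ y, πref y * Real.exp (T * r y) * (M - r y) := by
        rw [hSdef, hNdef, Finset.mul_sum, ← Finset.sum_sub_distrib]
        exact Finset.sum_congr rfl fun y _ => by ring
      rw [heq]
      have hterm : ∀ y, πref y * Real.exp (T * r y) * (M - r y) ≤ Real.exp (T * M) / T := by
        intro y
        have hπ1 : πref y ≤ 1 := by
          have h := Finset.single_le_sum (f := πref) (fun z _ => (hpos z).le)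
            (Finset.mem_univ y)
          rw [hsum] at h; exact h
        have hd : 0 ≤ M - r y := by linarith [hle y]
        set x : ℝ := T * (M - r y) with hxdef
        have hx0 : 0 ≤ x := by positivity
        have hxe : x ≤ Real.exp x := by
          have := Real.add_one_le_exp x
          linarith
        have hkey0 : x * Real.exp (-x) ≤ 1 := by
          rw [Real.exp_neg, ← div_eq_mul_inv]
          exact (div_le_one (Real.exp_pos x)).mpr hxe
        have hkey : Real.exp (-x) * (M - r y) ≤ 1 / T := by
          rw [le_div_iff₀ hT]
          calc Real.exp (-x) * (M - r y) * T = x * Real.exp (-x) := by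
                rw [hxdef]; ring
            _ ≤ 1 := hkey0
        have hsplit : Real.exp (T * r y) = Real.exp (T * M) * Real.exp (-x) := by
          rw [← Real.exp_add]
          congr 1
          rw [hxdef]; ring
        calc πref y * Real.exp (T * r y) * (M - r y)
            ≤ 1 * (Real.exp (T * r y) * (M - r y)) := by
              rw [mul_assoc]
              exact mul_le_mul_of_nonneg_right hπ1 (by positivity)
          _ = Real.exp (T * M) * (Real.exp (-x) * (M - r y)) := by
              rw [hsplit]; ring
          _ ≤ Real.exp (T * M) * (1 / T) := by
              exact mul_le_mul_of_nonneg_left hkey (Real.exp_pos _).le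
          _ = Real.exp (T * M) / T := by ring
      calc ∑ y, πref y * Real.exp (T * r y) * (M - r y)
          ≤ ∑ _y : Y, Real.exp (T * M) / T := Finset.sum_le_sum fun y _ => hterm y
        _ = c * (Real.exp (T * M) / T) := by
            rw [Finset.sum_const, hcdef]; simp [nsmul_eq_mul]
    have hgeq : g T = (M * S T - N T) / S T := by
      simp only [hgdef]
      rw [eq_div_iff (hSpos T).ne', sub_mul, div_mul_cancel₀ _ (hSpos T).ne']
    rw [hgeq]
    have := div_le_div₀ (by positivity : (0:ℝ) ≤ c * (Real.exp (T * M) / T)) hnum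
      (by positivity : (0:ℝ) < m * Real.exp (T * M)) hSlow
    refine this.trans (le_of_eq ?_)
    field_simp
  -- choose T large enough
  set T : ℝ := max 1 (2 * c / (m * (lam * Δ))) with hTdef
  clear_value T
  have hT1 : (1:ℝ) ≤ T := hTdef ▸ le_max_left _ _
  have hTpos : 0 < T := lt_of_lt_of_le one_pos hT1
  have hgT : g T < lam * Δ := by
    have h1 := hbound T hTpos
    have h2 : 2 * c / (m * (lam * Δ)) ≤ T := hTdef ▸ le_max_right _ _
    have hden : 0 < m * (lam * Δ) := by positivity
    have h3 : 2 * c ≤ T * (m * (lam * Δ)) := (div_le_iff₀ hden).mp h2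
    have h4 : c / (m * T) ≤ lam * Δ / 2 := by
      rw [div_le_div_iff₀ (mul_pos hmpos hTpos) two_pos]
      nlinarith
    have h5 : lam * Δ / 2 < lam * Δ := half_lt_self (by positivity)
    exact h1.trans_lt (h4.trans_lt h5)
  -- intermediate value theorem
  have hmem : lam * Δ ∈ Set.Icc (g T) (g 0) := by
    constructor
    · exact hgT.le
    · rw [hg0]; nlinarith
  obtain ⟨t₀, ht₀mem, ht₀⟩ := intermediate_value_Icc' hTpos.le hcont.continuousOn hmem
  have ht₀pos : 0 < t₀ := by
    rcases lt_or_eq_of_le ht₀mem.1 with h | h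
    · exact h
    · exfalso
      rw [← h, hg0] at ht₀
      nlinarith
  refine ⟨t₀⁻¹, inv_pos.mpr ht₀pos, ?_⟩
  have hry : ∀ y : Y, r y / t₀⁻¹ = t₀ * r y := by
    intro y
    rw [div_eq_mul_inv, inv_inv, mul_comm]
  simp only [hry]
  have hconv : (∑ y, (πref y * Real.exp (t₀ * r y) / (∑ y', πref y' * Real.exp (t₀ * r y'))) * r y)
      = N t₀ / S t₀ := by
    rw [hNdef, hSdef]
    simp only []
    rw [Finset.sum_div]
    exact Finset.sum_congr rfl fun y _ => div_mul_eq_mul_div _ _ _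
  rw [hconv]
  have := ht₀
  rw [hgdef] at this
  simp only [] at this
  rw [this, hΔdef]
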